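/- Let X ⊆ ℝ^n, f continuous, ρ > 0, and y* defined by y*_i = 1 if x*_i = 0 and y*_i = 0 otherwise. Then x* is a local minimizer of x ↦ f(x) + ρ‖x‖₀ over X if and only if (x*, y*) is a local minimizer of (x,y) ↦ f(x) + (ρ/2)∑_i y_i(y_i - 2) over {(x,y) : x ∈ X, x ∘ y = 0}. -/

import Mathlib

/-!
Near `x*` no nonzero entry can vanish, and near `y*` no entry `y*ᵢ = 1` can vanish; hence a
feasible pair `(x, y)` close to `(x*, y*)` has `x` supported exactly on the support of `x*` and
`y` vanishing there. On such pairs `‖x‖₀` is constant and `∑ yᵢ (yᵢ - 2) ≥ -#{i | x*ᵢ = 0}`,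
with equality at `y*`, which gives one direction. Conversely, points `x` near `x*` with the same
support as `x*` are reached through the feasible pairs `(x, y*)`, while points whose support is
strictly larger pay an extra `ρ` in the penalty, which continuity of `f` absorbs.
-/

open Finset Filter Topology

noncomputable def norm0 {n : ℕ} (x : Fin n → ℝ) : ℝ :=
  ((Finset.univ.filter fun i => x i ≠ 0).card : ℝ)

lemma norm0_congr {n : ℕ} {x x' : Fin n → ℝ} (h : ∀ i, x i ≠ 0 ↔ x' i ≠ 0) :
    norm0 x = norm0 x' := by
  unfold norm0
  congr 2
  exact Finset.filter_congr fun i _ => h i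

lemma norm0_add_one_le {n : ℕ} {x x' : Fin n → ℝ} (h : ∀ i, x i ≠ 0 → x' i ≠ 0) {j : Fin n}
    (hj : x j = 0) (hj' : x' j ≠ 0) : norm0 x + 1 ≤ norm0 x' := by
  unfold norm0
  have hlt : (univ.filter fun i => x i ≠ 0) ⊂ univ.filter fun i => x' i ≠ 0 :=
    (Finset.ssubset_iff_of_subset (Finset.monotone_filter_right _ fun i _ => h i)).2
      ⟨j, by simp [hj, hj']⟩
  exact_mod_cast Finset.card_lt_card hlt

lemma eventually_forall_ne_zero_of_ne_zero {ι M : Type*} [Finite ι] [TopologicalSpace M]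
    [T1Space M] [Zero M] (a : ι → M) : ∀ᶠ x in 𝓝 a, ∀ i, a i ≠ 0 → x i ≠ 0 := by
  rw [eventually_all]
  intro i
  by_cases h : a i = 0
  · exact .of_forall fun _ h' => absurd h h'
  · exact ((continuous_apply i).continuousAt.eventually_ne h).mono fun _ hx _ => hx

section ZeroIndicator

variable {ι : Type*}

/-- The vector `y*` of the reformulation. -/
noncomputable def zeroIndicator (a : ι → ℝ) : ι → ℝ := fun i => if a i = 0 then 1 else 0

lemma zeroIndicator_ne_zero_iff (a : ι → ℝ) (i : ι) : zeroIndicator a i ≠ 0 ↔ a i = 0 := by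
  unfold zeroIndicator
  split_ifs <;> simp [*]

lemma forall_mul_zeroIndicator_eq_zero_iff (a x : ι → ℝ) :
    (∀ i, x i * zeroIndicator a i = 0) ↔ ∀ i, a i = 0 → x i = 0 := by
  refine forall_congr' fun i => ?_
  rw [mul_eq_zero, ← zeroIndicator_ne_zero_iff a i]
  tauto

lemma eventually_support_eq_of_mul_eq_zero [Finite ι] (a : ι → ℝ) :
    ∀ᶠ p in 𝓝 (a, zeroIndicator a), (∀ i, p.1 i * p.2 i = 0) →
      (∀ i, p.1 i ≠ 0 ↔ a i ≠ 0) ∧ ∀ i, a i ≠ 0 → p.2 i = 0 := by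
  rw [nhds_prod_eq]
  filter_upwards [(eventually_forall_ne_zero_of_ne_zero a).prod_mk
    (eventually_forall_ne_zero_of_ne_zero (zeroIndicator a))] with p ⟨hx, hy⟩ hxy
  simp only [zeroIndicator_ne_zero_iff] at hy
  refine ⟨fun i => ⟨fun hxi hai => ?_, hx i⟩, fun i hai => ?_⟩
  · exact hy i hai ((mul_eq_zero.1 (hxy i)).resolve_left hxi)
  · exact (mul_eq_zero.1 (hxy i)).resolve_left (hx i hai)

/-- `y (y - 2) ≥ -1` with equality at `y = 1`. -/
lemma sum_zeroIndicator_mul_sub_two_le [Fintype ι] {a y : ι → ℝ} (h : ∀ i, a i ≠ 0 → y i = 0) :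
    ∑ i, zeroIndicator a i * (zeroIndicator a i - 2) ≤ ∑ i, y i * (y i - 2) := by
  refine Finset.sum_le_sum fun i _ => ?_
  by_cases hai : a i = 0
  · simp only [zeroIndicator, hai, if_true]
    nlinarith [sq_nonneg (y i - 1)]
  · simp [zeroIndicator, hai, h i hai]

end ZeroIndicator

section Reformulation

variable {n : ℕ} {X : Set (Fin n → ℝ)} {f : (Fin n → ℝ) → ℝ} {ρ : ℝ} {a : Fin n → ℝ}

lemma IsLocalMinOn.isLocalMinOn_reformulation (hρ : 0 ≤ ρ)
    (hmin : IsLocalMinOn (fun x => f x + ρ * norm0 x) X a) :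
    IsLocalMinOn
      (fun p : (Fin n → ℝ) × (Fin n → ℝ) => f p.1 + (ρ / 2) * ∑ i, p.2 i * (p.2 i - 2))
      {p | p.1 ∈ X ∧ ∀ i, p.1 i * p.2 i = 0} (a, zeroIndicator a) := by
  rw [IsLocalMinOn, IsMinFilter, eventually_nhdsWithin_iff] at hmin ⊢
  filter_upwards [(continuous_fst.tendsto (a, zeroIndicator a)).eventually hmin,
    eventually_support_eq_of_mul_eq_zero a] with p hp hsupp ⟨hpX, hpy⟩
  obtain ⟨hsupp_eq, hy⟩ := hsupp hpy
  have hf : f a ≤ f p.1 := by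
    have := hp hpX
    rw [norm0_congr hsupp_eq] at this
    linarith
  exact add_le_add hf <| mul_le_mul_of_nonneg_left (sum_zeroIndicator_mul_sub_two_le hy)
    (by positivity)

lemma IsLocalMinOn.isLocalMinOn_norm0 (hf : Continuous f) (hρ : 0 < ρ)
    (hmin : IsLocalMinOn
      (fun p : (Fin n → ℝ) × (Fin n → ℝ) => f p.1 + (ρ / 2) * ∑ i, p.2 i * (p.2 i - 2))
      {p | p.1 ∈ X ∧ ∀ i, p.1 i * p.2 i = 0} (a, zeroIndicator a)) :
    IsLocalMinOn (fun x => f x + ρ * norm0 x) X a := by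
  rw [IsLocalMinOn, IsMinFilter, eventually_nhdsWithin_iff] at hmin ⊢
  have hpair : Tendsto (fun x => (x, zeroIndicator a)) (𝓝 a) (𝓝 (a, zeroIndicator a)) :=
    (continuous_id.prodMk continuous_const).tendsto a
  have hnear : ∀ᶠ x in 𝓝 a, f a - ρ < f x :=
    continuousAt_const.eventually_lt hf.continuousAt (by linarith)
  filter_upwards [hpair.eventually hmin, eventually_forall_ne_zero_of_ne_zero a, hnear]
    with x hx hsupp hfx hxX
  by_cases hzero : ∀ i, a i = 0 → x i = 0
  · have hfeas := (forall_mul_zeroIndicator_eq_zero_iff a x).2 hzero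
    have hle : f a ≤ f x := by simpa using hx ⟨hxX, hfeas⟩
    have heq : norm0 x = norm0 a := norm0_congr fun i => ⟨fun h hai => h (hzero i hai), hsupp i⟩
    simp only [heq]
    linarith
  · push Not at hzero
    obtain ⟨j, haj, hxj⟩ := hzero
    have := mul_le_mul_of_nonneg_left (norm0_add_one_le hsupp haj hxj) hρ.le
    linarith

end Reformulation

theorem stmt8 {n : ℕ} (X : Set (Fin n → ℝ)) (f : (Fin n → ℝ) → ℝ)
    (hf : Continuous f) (ρ : ℝ) (hρ : 0 < ρ)
    (xstar ystar : Fin n → ℝ)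
    (hy : ystar = fun i => if xstar i = 0 then 1 else 0) :
    IsLocalMinOn (fun x => f x + ρ * norm0 x) X xstar ↔
    IsLocalMinOn
      (fun p : (Fin n → ℝ) × (Fin n → ℝ) => f p.1 + (ρ / 2) * ∑ i, p.2 i * (p.2 i - 2))
      {p | p.1 ∈ X ∧ ∀ i, p.1 i * p.2 i = 0}
      (xstar, ystar) := by
  obtain rfl : ystar = zeroIndicator xstar := hy
  exact ⟨fun h => h.isLocalMinOn_reformulation hρ.le, fun h => h.isLocalMinOn_norm0 hf hρ⟩
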